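/- Let Θ(·;λ) be any threshold function, Θ^{−1}(u;λ) = sup{t : Θ(t;λ) ≤ u}, P_Θ(t;λ) = ∫₀^{|t|}{Θ^{−1}(u;λ) − u} du, and ψ(t;λ) = t − Θ(t;λ). Then for every r ∈ ℝ: (1/2){r − Θ(r;λ)}² + P_Θ(Θ(r;λ);λ) = ∫₀^{|r|} ψ(t;λ) dt. -/

import Mathlib

/-!
For `r ≥ 0` the identity is Young's equality for the monotone function `f = Θ(·;λ)` and
its generalized inverse `g = Θ⁻¹(·;λ)`: with `b = f r`, `∫₀^b g + ∫₀^r f = r b`, after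
which `½(r - b)² + ∫₀^b (g u - u) du = r²/2 - ∫₀^r f` is algebra. Young's equality follows
from the layer-cake formula: for `t > 0` the slice `{u ∈ (0, b] : f t ≤ u}`, of length
`b - f t` for `t ≤ r` and `0` beyond, lies between `{t < g u}` and `{t ≤ g u}`, whose
measures agree for almost every `t`. Oddness of `Θ` reduces `r < 0` to `|r|`.
-/

open MeasureTheory Matrix Filter
open scoped ENNReal NNReal BigOperators

noncomputable section

namespace RRRStmt

/-- Squared Frobenius norm `‖A‖_F²`. -/
def froSq {n m : ℕ} (A : Matrix (Fin n) (Fin m) ℝ) : ℝ := ∑ i, ∑ j, (A i j) ^ 2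

/-- Frobenius norm `‖A‖_F`. -/
def fro {n m : ℕ} (A : Matrix (Fin n) (Fin m) ℝ) : ℝ := Real.sqrt (froSq A)

/-- ℓ₂ norm of the `i`-th row of `A`. -/
def rowNorm {n m : ℕ} (A : Matrix (Fin n) (Fin m) ℝ) (i : Fin n) : ℝ :=
  Real.sqrt (∑ j, (A i j) ^ 2)

open Classical in
/-- Number of nonzero rows, `‖A‖_{2,0}`. -/
def numNZRows {n m : ℕ} (A : Matrix (Fin n) (Fin m) ℝ) : ℕ :=
  (Finset.univ.filter fun i => A i ≠ 0).card

open Classical in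
/-- Row support of `A`: indices of nonzero rows. -/
def rowSupp {n m : ℕ} (A : Matrix (Fin n) (Fin m) ℝ) : Finset (Fin n) :=
  Finset.univ.filter fun i => A i ≠ 0

open Classical in
/-- Number of entries at which two matrices differ, `‖A - B‖₀`. -/
def numDiff {n m : ℕ} (A B : Matrix (Fin n) (Fin m) ℝ) : ℕ :=
  (Finset.univ.filter fun q : Fin n × Fin m => A q.1 q.2 ≠ B q.1 q.2).card

/-- A threshold function `Θ(t; λ)`: odd, nondecreasing in `t`, tending to `∞`, and with
`0 ≤ Θ(t;λ) ≤ t` for `t ≥ 0`. -/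
def IsThresholdFun (Θ : ℝ → ℝ → ℝ) : Prop :=
  (∀ t lam : ℝ, 0 ≤ lam → Θ (-t) lam = -Θ t lam) ∧
  (∀ t t' lam : ℝ, 0 ≤ lam → t ≤ t' → Θ t lam ≤ Θ t' lam) ∧
  (∀ lam : ℝ, 0 ≤ lam → Tendsto (fun t => Θ t lam) atTop atTop) ∧
  (∀ t lam : ℝ, 0 ≤ lam → 0 ≤ t → 0 ≤ Θ t lam ∧ Θ t lam ≤ t)

/-- `Θ⁻¹(u;λ) = sup {s : Θ(s;λ) ≤ u}`. -/
def ThetaInv (Θ : ℝ → ℝ → ℝ) (lam u : ℝ) : ℝ := sSup {s : ℝ | Θ s lam ≤ u}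

/-- `P_Θ(t;λ) = ∫₀^{|t|} (Θ⁻¹(u;λ) - u) du`. -/
def PTheta (Θ : ℝ → ℝ → ℝ) (t lam : ℝ) : ℝ := ∫ u in (0:ℝ)..|t|, (ThetaInv Θ lam u - u)

/-- The penalty `P` is associated with the threshold `Θ` through the penalty construction:
`P(t;λ) - P(0;λ) = P_Θ(t;λ) + q(t;λ)` for some nonnegative `q` vanishing on the range of `Θ`. -/
def IsPenaltyFor (Θ P : ℝ → ℝ → ℝ) : Prop :=
  ∃ q : ℝ → ℝ → ℝ, (∀ t lam : ℝ, 0 ≤ lam → 0 ≤ q t lam) ∧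
    (∀ s lam : ℝ, 0 ≤ lam → q (Θ s lam) lam = 0) ∧
    (∀ t lam : ℝ, 0 ≤ lam → P t lam - P 0 lam = PTheta Θ t lam + q t lam)

/-- Euclidean norm of a vector. -/
def vnorm {m : ℕ} (a : Fin m → ℝ) : ℝ := Real.sqrt (∑ j, (a j) ^ 2)

open Classical in
/-- Multivariate thresholding `vecΘ(a;λ) = a·Θ(‖a‖₂;λ)/‖a‖₂` (and `0` at `0`). -/
def vecTheta (Θ : ℝ → ℝ → ℝ) (lam : ℝ) {m : ℕ} (a : Fin m → ℝ) : Fin m → ℝ :=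
  if a = 0 then 0 else (Θ (vnorm a) lam / vnorm a) • a

/-- Row-wise multivariate thresholding of a matrix. -/
def matTheta (Θ : ℝ → ℝ → ℝ) (lam : ℝ) {n m : ℕ} (A : Matrix (Fin n) (Fin m) ℝ) :
    Matrix (Fin n) (Fin m) ℝ :=
  Matrix.of fun i => vecTheta Θ lam (A i)

/-- Hard-thresholding penalty `P_H(t;λ)`. -/
def PH (t lam : ℝ) : ℝ := if |t| < lam then -t ^ 2 / 2 + lam * |t| else lam ^ 2 / 2

/-- Law of an `n × m` noise matrix with i.i.d. `N(0, σ²)` entries. -/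
def gaussianNoise (n m : ℕ) (σ : ℝ) : Measure (Fin n → Fin m → ℝ) :=
  Measure.pi fun _ => Measure.pi fun _ => ProbabilityTheory.gaussianReal 0 (Real.toNNReal (σ ^ 2))

/-- Robust loss `ρ(t;λ) = ∫₀^{|t|} (u - Θ(u;λ)) du`. -/
def rho (Θ : ℝ → ℝ → ℝ) (lam t : ℝ) : ℝ := ∫ u in (0:ℝ)..|t|, (u - Θ u lam)

section YoungEquality

open Set

variable {f : ℝ → ℝ}

lemma bddAbove_setOf_le_of_tendsto (hf : Tendsto f atTop atTop) (u : ℝ) :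
    BddAbove {s | f s ≤ u} := by
  obtain ⟨M, hM⟩ := (hf.eventually_gt_atTop u).exists_forall_of_atTop
  exact ⟨M, fun s hs => le_of_not_gt fun hMs => (hM s hMs.le).not_ge hs⟩

lemma zero_mem_setOf_le (hf0 : f 0 = 0) {u : ℝ} (hu : 0 ≤ u) : (0 : ℝ) ∈ {s | f s ≤ u} := by
  simpa [hf0] using hu

lemma monotoneOn_sSup_setOf_le (hf0 : f 0 = 0) (hf : Tendsto f atTop atTop) :
    MonotoneOn (fun u => sSup {s | f s ≤ u}) (Ici 0) := fun _ hu u' _ huu' =>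
  csSup_le_csSup (bddAbove_setOf_le_of_tendsto hf u') ⟨0, zero_mem_setOf_le hf0 hu⟩
    fun _ hs => le_trans hs huu'

lemma intervalIntegrable_sSup_setOf_le (hf0 : f 0 = 0) (hf : Tendsto f atTop atTop) {b : ℝ}
    (hb : 0 ≤ b) : IntervalIntegrable (fun u => sSup {s | f s ≤ u}) volume 0 b :=
  ((monotoneOn_sSup_setOf_le hf0 hf).mono
    (by simp [uIcc_of_le hb, Icc_subset_Ici_self])).intervalIntegrable

lemma measureReal_restrict_Ioc_setOf_le {b c : ℝ} (hc : 0 ≤ c) :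
    (volume.restrict (Ioc 0 b)).real {u | c ≤ u} = max (b - c) 0 := by
  have hset : (Ici c ∩ Ioc 0 b : Set ℝ) =ᵐ[volume] Ioc c b := by
    rw [inter_comm, show Ioc c b = Ioc 0 b ∩ Ioi c by rw [Ioc_inter_Ioi, sup_eq_right.2 hc]]
    exact (ae_eq_refl _).inter Ioi_ae_eq_Ici.symm
  change (volume.restrict _).real (Ici c) = _
  rw [measureReal_restrict_apply measurableSet_Ici, measureReal_congr hset, Real.volume_real_Ioc]

theorem integral_sSup_setOf_le (hf : Monotone f) (hf0 : f 0 = 0)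
    (hftop : Tendsto f atTop atTop) {r : ℝ} (hr : 0 ≤ r) :
    ∫ u in 0..f r, sSup {s | f s ≤ u} = r * f r - ∫ t in 0..r, f t := by
  set g : ℝ → ℝ := fun u => sSup {s | f s ≤ u}
  set b := f r
  have hb : 0 ≤ b := hf0 ▸ hf hr
  have hg_int : IntegrableOn g (Ioc 0 b) := (intervalIntegrable_sSup_setOf_le hf0 hftop hb).1
  set μ := volume.restrict (Ioc 0 b)
  have hslice :
      ∀ᵐ t ∂volume.restrict (Ioi 0), μ.real {u | t < g u} = μ.real {u | f t ≤ u} := by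
    filter_upwards [meas_le_ae_eq_meas_lt μ (volume.restrict (Ioi 0)) g] with t ht
    have hlt : {u | t < g u} ≤ᵐ[μ] {u | f t ≤ u} := by
      refine ae_restrict_of_forall_mem measurableSet_Ioc fun u hu htu => ?_
      obtain ⟨s, hs, hts⟩ := exists_lt_of_lt_csSup ⟨0, zero_mem_setOf_le hf0 hu.1.le⟩ htu
      exact (hf hts.le).trans hs
    have hle : {u | f t ≤ u} ≤ᵐ[μ] {u | t ≤ g u} :=
      ae_of_all _ fun u htu => le_csSup (bddAbove_setOf_le_of_tendsto hftop u) htu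
    rw [measureReal_def, measureReal_def,
      le_antisymm (measure_mono_ae hlt) (ht ▸ measure_mono_ae hle)]
  calc ∫ u in 0..b, g u
      = ∫ t in Ioi 0, μ.real {u | t < g u} := by
        rw [intervalIntegral.integral_of_le hb]
        exact hg_int.integral_eq_integral_meas_lt <|
          ae_restrict_of_forall_mem measurableSet_Ioc fun u hu =>
            le_csSup (bddAbove_setOf_le_of_tendsto hftop u) (zero_mem_setOf_le hf0 hu.1.le)
    _ = ∫ t in Ioi 0, max (b - f t) 0 := by
        rw [integral_congr_ae hslice]
        exact setIntegral_congr_fun measurableSet_Ioi fun t ht =>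
          measureReal_restrict_Ioc_setOf_le (hf0 ▸ hf ht.le)
    _ = ∫ t in Ioc 0 r, (b - f t) := by
        rw [setIntegral_eq_of_subset_of_forall_sdiff_eq_zero measurableSet_Ioi
          (Ioc_subset_Ioi_self : Ioc 0 r ⊆ Ioi 0)]
        · exact setIntegral_congr_fun measurableSet_Ioc fun t ht =>
            max_eq_left (sub_nonneg.2 (hf ht.2))
        · rintro t ⟨ht, htr⟩
          exact max_eq_right (sub_nonpos.2 (hf (not_le.1 fun h => htr ⟨ht, h⟩).le))
    _ = r * b - ∫ t in 0..r, f t := by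
        rw [← intervalIntegral.integral_of_le hr, intervalIntegral.integral_sub
          intervalIntegrable_const (hf.monotoneOn _).intervalIntegrable]
        simp

theorem half_sq_add_integral_sSup_setOf_le_sub (hf : Monotone f) (hf0 : f 0 = 0)
    (hftop : Tendsto f atTop atTop) {r : ℝ} (hr : 0 ≤ r) :
    (1 / 2) * (r - f r) ^ 2 + ∫ u in 0..f r, (sSup {s | f s ≤ u} - u) =
      ∫ t in 0..r, (t - f t) := by
  rw [intervalIntegral.integral_sub (intervalIntegrable_sSup_setOf_le hf0 hftop (hf0 ▸ hf hr))
      intervalIntegral.intervalIntegrable_id,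
    intervalIntegral.integral_sub intervalIntegral.intervalIntegrable_id
      (hf.monotoneOn _).intervalIntegrable,
    integral_sSup_setOf_le hf hf0 hftop hr, integral_id, integral_id]
  ring

end YoungEquality

namespace IsThresholdFun

variable {Θ : ℝ → ℝ → ℝ} {lam : ℝ}

lemma monotone (hΘ : IsThresholdFun Θ) (hlam : 0 ≤ lam) : Monotone (Θ · lam) :=
  fun _ _ => hΘ.2.1 _ _ lam hlam

lemma apply_zero (hΘ : IsThresholdFun Θ) (hlam : 0 ≤ lam) : Θ 0 lam = 0 :=
  le_antisymm (hΘ.2.2.2 0 lam hlam le_rfl).2 (hΘ.2.2.2 0 lam hlam le_rfl).1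

lemma apply_abs (hΘ : IsThresholdFun Θ) (hlam : 0 ≤ lam) (r : ℝ) :
    Θ |r| lam = |Θ r lam| := by
  rcases le_total 0 r with hr | hr
  · rw [abs_of_nonneg hr, abs_of_nonneg (hΘ.2.2.2 r lam hlam hr).1]
  · have hneg := hΘ.1 r lam hlam
    have hpos := (hΘ.2.2.2 (-r) lam hlam (neg_nonneg.2 hr)).1
    rw [abs_of_nonpos hr, hneg, abs_of_nonpos (by linarith)]

lemma abs_sub_apply (hΘ : IsThresholdFun Θ) (hlam : 0 ≤ lam) (r : ℝ) :
    |r - Θ r lam| = |r| - Θ |r| lam := by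
  rcases le_total 0 r with hr | hr
  · rw [abs_of_nonneg hr, abs_of_nonneg (sub_nonneg.2 (hΘ.2.2.2 r lam hlam hr).2)]
  · have hneg := hΘ.1 r lam hlam
    have hle := (hΘ.2.2.2 (-r) lam hlam (neg_nonneg.2 hr)).2
    rw [abs_of_nonpos hr, hneg, abs_of_nonpos (by linarith)]
    ring

end IsThresholdFun

/-- Lemma 2: the thresholding identity
`½(r - Θ(r;λ))² + P_Θ(Θ(r;λ);λ) = ∫₀^{|r|} ψ(t;λ) dt` with `ψ(t;λ) = t - Θ(t;λ)`. -/
theorem thresholding_identity (Θ : ℝ → ℝ → ℝ) (hΘ : IsThresholdFun Θ)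
    (lam : ℝ) (hlam : 0 ≤ lam) (r : ℝ) :
    (1/2) * (r - Θ r lam) ^ 2 + PTheta Θ (Θ r lam) lam =
      ∫ t in (0:ℝ)..|r|, (t - Θ t lam) := by
  rw [PTheta, ← hΘ.apply_abs hlam, ← sq_abs, hΘ.abs_sub_apply hlam]
  exact half_sq_add_integral_sSup_setOf_le_sub (hΘ.monotone hlam) (hΘ.apply_zero hlam)
    (hΘ.2.2.1 lam hlam) (abs_nonneg r)

end RRRStmt
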